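/- arXiv:2105.12975 — 5 statements merged into one kernel-verified Lean document; each statement's English description precedes it below -/
import Mathlib

section
/- Let X_1,…,X_T be independent p×q random matrices with i.i.d. entries of mean 0, variance 1 and fourth moment ν₄, and let Σ_V be a deterministic q×q real symmetric positive semidefinite matrix with tr(Σ_V) = q. Define S̃ = √(Tq/p) · ((Tq)⁻¹ ∑_{t=1}^T X_t Σ_V X_tᵀ − I_p). Then E[tr(S̃²)] = (ν₄ − 3) q⁻¹ ∑_{j=1}^q (Σ_V)_{jj}² + (p+1) q⁻¹ ‖Σ_V‖_F². -/
/-!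
Write `A = ∑ₜ Xₜ Σ_V Xₜᵀ`, so that `tr S̃² = (Tq/p) ((Tq)⁻² tr A² - 2 (Tq)⁻¹ tr A + p)`.
Each entry `A i i'` is the quadratic form `xᵀ K x` of the vector `x` of all `Tpq` entries of the
`Xₜ`, with `K = I_T ⊗ E_{ii'} ⊗ Σ_V`. For independent standardized entries the fourth moments are
`E[x_a x_b x_c x_d] = δ_ab δ_cd + δ_ac δ_bd + δ_ad δ_bc + (ν₄ - 3) δ_abcd`, since an index
occurring exactly once kills the moment; hence
`E[(xᵀ M x)(xᵀ N x)] = tr M tr N + tr (M N) + tr (M Nᵀ) + (ν₄ - 3) tr (M ⊙ N)`,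
and the traces of the Kronecker products factor.
-/

open MeasureTheory ProbabilityTheory Matrix
open scoped ENNReal Kronecker

section MatrixAlgebra

variable {τ m n R : Type*} [CommSemiring R]

lemma dotProduct_mulVec_self [Fintype m] (M : Matrix m m R) (x : m → R) :
    x ⬝ᵥ M *ᵥ x = ∑ a, ∑ b, M a b * (x a * x b) := by
  simp only [dotProduct, mulVec, Finset.mul_sum]
  exact Finset.sum_congr rfl fun a _ => Finset.sum_congr rfl fun b _ => by ring

lemma dotProduct_mulVec_self_mul [Fintype m] (M N : Matrix m m R) (x : m → R) :
    (x ⬝ᵥ M *ᵥ x) * (x ⬝ᵥ N *ᵥ x)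
      = ∑ a, ∑ b, ∑ c, ∑ d, M a b * N c d * (x a * x b * x c * x d) := by
  simp only [dotProduct_mulVec_self, Finset.sum_mul]
  simp only [Finset.mul_sum]
  exact Finset.sum_congr rfl fun a _ => Finset.sum_congr rfl fun b _ =>
    Finset.sum_congr rfl fun c _ => Finset.sum_congr rfl fun d _ => by ring

lemma trace_single [Fintype m] [DecidableEq m] (i j : m) (c : R) :
    trace (single i j c) = if i = j then c else 0 := by
  split_ifs with h
  · subst h
    exact trace_single_eq_same i c
  · exact trace_single_eq_of_ne i j c h

lemma trace_mul_transpose_self [Fintype n] (S : Matrix n n ℝ) :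
    trace (S * Sᵀ) = ∑ i, ∑ j, S i j ^ 2 := by
  simp [← sum_hadamard_eq, hadamard_apply, sq]

lemma trace_hadamard_self [Fintype n] (S : Matrix n n ℝ) :
    trace (S ⊙ S) = ∑ j, S j j ^ 2 := by
  simp [trace, hadamard_apply, sq]

lemma trace_mul_self_sqrt_smul_smul_sub_one [Fintype m] [DecidableEq m] {r : ℝ} (hr : 0 ≤ r)
    (c : ℝ) (A : Matrix m m ℝ) :
    trace ((√r • (c • A - 1)) * (√r • (c • A - 1)))
      = r * (c ^ 2 * trace (A * A) - 2 * c * trace A + Fintype.card m) := by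
  simp only [smul_mul_smul, Real.mul_self_sqrt hr, sub_mul, mul_sub, trace_smul, trace_sub,
    mul_one, one_mul, trace_one, smul_eq_mul]
  ring

variable [Fintype τ] [Fintype m] [Fintype n] [DecidableEq τ] [DecidableEq m]

lemma sum_mul_mul_transpose_apply (X : τ → Matrix m n R) (S : Matrix n n R) (i i' : m) :
    (∑ t, X t * S * (X t)ᵀ) i i'
      = (fun a : τ × m × n => X a.1 a.2.1 a.2.2) ⬝ᵥ
          ((1 : Matrix τ τ R) ⊗ₖ (single i i' 1 ⊗ₖ S)) *ᵥ (fun a => X a.1 a.2.1 a.2.2) := by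
  simp only [dotProduct_mulVec_self, Fintype.sum_prod_type, Matrix.sum_apply, mul_apply,
    kroneckerMap_apply, one_apply, single_apply, transpose_apply, ite_and, ite_mul, mul_ite,
    one_mul, zero_mul, mul_zero, Finset.sum_ite_irrel, Finset.sum_const_zero, Finset.sum_ite_eq,
    Finset.mem_univ, if_true, Finset.sum_mul]
  refine Finset.sum_congr rfl fun t _ => ?_
  rw [Finset.sum_comm]
  exact Finset.sum_congr rfl fun j _ => Finset.sum_congr rfl fun k _ => by ring

lemma trace_sum_mul_mul_transpose (X : τ → Matrix m n R) (S : Matrix n n R) :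
    trace (∑ t, X t * S * (X t)ᵀ)
      = ∑ i, (fun a : τ × m × n => X a.1 a.2.1 a.2.2) ⬝ᵥ
          ((1 : Matrix τ τ R) ⊗ₖ (single i i 1 ⊗ₖ S)) *ᵥ (fun a => X a.1 a.2.1 a.2.2) := by
  simp only [trace, diag, sum_mul_mul_transpose_apply]

lemma trace_sq_sum_mul_mul_transpose (X : τ → Matrix m n R) (S : Matrix n n R) :
    trace ((∑ t, X t * S * (X t)ᵀ) * ∑ t, X t * S * (X t)ᵀ)
      = ∑ i, ∑ i', ((fun a : τ × m × n => X a.1 a.2.1 a.2.2) ⬝ᵥ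
          ((1 : Matrix τ τ R) ⊗ₖ (single i i' 1 ⊗ₖ S)) *ᵥ (fun a => X a.1 a.2.1 a.2.2))
        * ((fun a : τ × m × n => X a.1 a.2.1 a.2.2) ⬝ᵥ
          ((1 : Matrix τ τ R) ⊗ₖ (single i' i 1 ⊗ₖ S)) *ᵥ (fun a => X a.1 a.2.1 a.2.2)) := by
  simp only [trace, diag, mul_apply, sum_mul_mul_transpose_apply]

variable (S : Matrix n n R) (i i' : m)

lemma trace_one_kronecker_single_kronecker :
    trace ((1 : Matrix τ τ R) ⊗ₖ (single i i' 1 ⊗ₖ S))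
      = if i = i' then Fintype.card τ * trace S else 0 := by
  simp [trace_kronecker, trace_single]

lemma trace_one_kronecker_single_kronecker_mul :
    trace ((1 : Matrix τ τ R) ⊗ₖ (single i i' 1 ⊗ₖ S) * (1 ⊗ₖ (single i' i 1 ⊗ₖ S)))
      = Fintype.card τ * trace (S * S) := by
  simp [← mul_kronecker_mul, trace_kronecker, single_mul_single_same]

lemma trace_one_kronecker_single_kronecker_mul_transpose :
    trace ((1 : Matrix τ τ R) ⊗ₖ (single i i' 1 ⊗ₖ S) * (1 ⊗ₖ (single i' i 1 ⊗ₖ S))ᵀ)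
      = if i = i' then Fintype.card τ * trace (S * Sᵀ) else 0 := by
  rcases eq_or_ne i i' with rfl | h
  · simp [← kroneckerMap_transpose, ← mul_kronecker_mul, trace_kronecker, single_mul_single_same]
  · simp [← kroneckerMap_transpose, ← mul_kronecker_mul, single_mul_single_of_ne _ _ _ _ h.symm, h]

lemma trace_one_kronecker_single_kronecker_hadamard :
    trace ((1 : Matrix τ τ R) ⊗ₖ (single i i' 1 ⊗ₖ S) ⊙ (1 ⊗ₖ (single i' i 1 ⊗ₖ S)))
      = if i = i' then Fintype.card τ * trace (S ⊙ S) else 0 := by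
  rcases eq_or_ne i i' with rfl | h
  · simp [kronecker_hadamard_kronecker, trace_kronecker, single_hadamard_single_eq, hadamard_one]
  · simp [kronecker_hadamard_kronecker, single_hadamard_single_of_ne, h]

end MatrixAlgebra

lemma ENNReal.inv_four_add_inv_four : (4 : ℝ≥0∞)⁻¹ + 4⁻¹ = 2⁻¹ := by
  rw [← two_mul, show (4 : ℝ≥0∞) = 2 * 2 by norm_num, ENNReal.mul_inv (by simp) (by simp),
    ← mul_assoc, ENNReal.mul_inv_cancel (by simp) (by simp), one_mul]

section Moments

variable {Ω ι : Type*} [MeasurableSpace Ω] {μ : Measure Ω} {Y : ι → Ω → ℝ}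

lemma MeasureTheory.MemLp.mul_of_four {f g : Ω → ℝ} (hf : MemLp f 4 μ) (hg : MemLp g 4 μ) :
    MemLp (f * g) 2 μ :=
  haveI : ENNReal.HolderTriple 4 4 2 := ⟨ENNReal.inv_four_add_inv_four⟩
  hg.mul hf

lemma integrable_mul_mul_mul (hY : ∀ a, MemLp (Y a) 4 μ) (a b c d : ι) :
    Integrable (fun ω => Y a ω * Y b ω * Y c ω * Y d ω) μ := by
  refine (((hY a).mul_of_four (hY b)).integrable_mul ((hY c).mul_of_four (hY d))).congr
    (ae_of_all _ fun ω => ?_)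
  simp only [Pi.mul_apply, mul_assoc]

namespace ProbabilityTheory.iIndepFun

lemma integral_sq_mul_sq (hindep : iIndepFun Y μ) (hY : ∀ a, AEStronglyMeasurable (Y a) μ)
    (hvar : ∀ a, ∫ ω, Y a ω ^ 2 ∂μ = 1) {a b : ι} (hab : a ≠ b) :
    ∫ ω, Y a ω ^ 2 * Y b ω ^ 2 ∂μ = 1 := by
  have h := ((hindep.indepFun hab).comp (φ := fun x => x ^ 2) (ψ := fun x => x ^ 2)
    (by fun_prop) (by fun_prop)).integral_mul_eq_mul_integral
    ((continuous_pow 2).comp_aestronglyMeasurable (hY a))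
    ((continuous_pow 2).comp_aestronglyMeasurable (hY b))
  simpa [hvar] using h

variable [DecidableEq ι]

lemma indepFun_mul_mul_right₀ (hindep : iIndepFun Y μ) (hY : ∀ a, AEMeasurable (Y a) μ)
    {a b c d : ι} (hb : a ≠ b) (hc : a ≠ c) (hd : a ≠ d) :
    IndepFun (Y a) (Y b * Y c * Y d) μ := by
  have h := hindep.indepFun_finset₀ {a} {b, c, d} (by simp [hb, hc, hd]) hY
  exact h.comp (φ := fun y : ({a} : Finset ι) → ℝ => y ⟨a, by simp⟩)
    (ψ := fun y : ({b, c, d} : Finset ι) → ℝ => y ⟨b, by simp⟩ * y ⟨c, by simp⟩ * y ⟨d, by simp⟩)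
    (by fun_prop) (by fun_prop)

lemma integral_mul_eq_ite (hindep : iIndepFun Y μ) (hY : ∀ a, AEStronglyMeasurable (Y a) μ)
    (hmean : ∀ a, ∫ ω, Y a ω ∂μ = 0) (hvar : ∀ a, ∫ ω, Y a ω ^ 2 ∂μ = 1) (a b : ι) :
    ∫ ω, Y a ω * Y b ω ∂μ = if a = b then 1 else 0 := by
  rcases eq_or_ne a b with rfl | hab
  · simpa [sq] using hvar a
  · simpa [hab, hmean] using (hindep.indepFun hab).integral_mul_eq_mul_integral (hY a) (hY b)

lemma integral_mul_mul_mul_eq_zero (hindep : iIndepFun Y μ)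
    (hY : ∀ a, AEStronglyMeasurable (Y a) μ) (hmean : ∀ a, ∫ ω, Y a ω ∂μ = 0)
    {a b c d : ι} (hb : a ≠ b) (hc : a ≠ c) (hd : a ≠ d) :
    ∫ ω, Y a ω * (Y b ω * Y c ω * Y d ω) ∂μ = 0 := by
  have h := (hindep.indepFun_mul_mul_right₀ (fun a => (hY a).aemeasurable) hb hc hd)
    |>.integral_mul_eq_mul_integral (hY a) (((hY b).mul (hY c)).mul (hY d))
  simpa [hmean a] using h

lemma integral_mul_mul_mul_eq (hindep : iIndepFun Y μ) (hY : ∀ a, AEStronglyMeasurable (Y a) μ)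
    (hmean : ∀ a, ∫ ω, Y a ω ∂μ = 0) (hvar : ∀ a, ∫ ω, Y a ω ^ 2 ∂μ = 1) {ν : ℝ}
    (hfour : ∀ a, ∫ ω, Y a ω ^ 4 ∂μ = ν) (a b c d : ι) :
    ∫ ω, Y a ω * Y b ω * Y c ω * Y d ω ∂μ =
      (if a = b then 1 else 0) * (if c = d then 1 else 0)
        + (if a = c then 1 else 0) * (if b = d then 1 else 0)
        + (if a = d then 1 else 0) * (if b = c then 1 else 0)
        + (ν - 3) * (if a = b ∧ a = c ∧ a = d then 1 else 0) := by
  have vanish : ∀ {f : Ω → ℝ} (x b c d : ι), x ≠ b → x ≠ c → x ≠ d →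
      (∀ ω, f ω = Y x ω * (Y b ω * Y c ω * Y d ω)) → ∫ ω, f ω ∂μ = 0 :=
    fun x b c d hb hc hd hf => (integral_congr_ae (ae_of_all _ hf)).trans
      (hindep.integral_mul_mul_mul_eq_zero hY hmean hb hc hd)
  have two_pairs : ∀ {f : Ω → ℝ} {x y : ι}, x ≠ y → (∀ ω, f ω = Y x ω ^ 2 * Y y ω ^ 2) →
      ∫ ω, f ω ∂μ = 1 :=
    fun hxy hf => (integral_congr_ae (ae_of_all _ hf)).trans (hindep.integral_sq_mul_sq hY hvar hxy)
  rcases eq_or_ne a b with rfl | hab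
  · rcases eq_or_ne c d with rfl | hcd
    · rcases eq_or_ne a c with rfl | hac
      · simp only [if_true, and_self, ← hfour a]
        ring_nf
      · exact (two_pairs hac fun ω => by ring).trans (by simp [hac])
    · rcases eq_or_ne a c with rfl | hac
      · exact (vanish d a a a hcd.symm hcd.symm hcd.symm fun ω => by ring).trans (by simp [hcd])
      · exact (vanish c a a d hac.symm hac.symm hcd fun ω => by ring).trans (by simp [hac, hcd])
  · rcases eq_or_ne a c with rfl | hac
    · rcases eq_or_ne b d with rfl | hbd
      · exact (two_pairs hab fun ω => by ring).trans (by simp [hab, hab.symm])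
      · exact (vanish b a a d hab.symm hab.symm hbd fun ω => by ring).trans
          (by simp [hab, hbd, hab.symm])
    · rcases eq_or_ne a d with rfl | had
      · rcases eq_or_ne b c with rfl | hbc
        · exact (two_pairs hab fun ω => by ring).trans (by simp [hab, hab.symm])
        · exact (vanish b a c a hab.symm hbc hab.symm fun ω => by ring).trans
            (by simp [hab, hac, hbc])
      · exact (vanish a b c d hab hac had fun ω => by ring).trans (by simp [hab, hac, had])

end ProbabilityTheory.iIndepFun

end Moments

section QuadraticForms

variable {Ω ι : Type*} [MeasurableSpace Ω] {μ : Measure Ω} [Fintype ι] {Y : ι → Ω → ℝ}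

lemma integrable_dotProduct_mulVec (hY : ∀ a, MemLp (Y a) 2 μ) (M : Matrix ι ι ℝ) :
    Integrable (fun ω => (Y · ω) ⬝ᵥ M *ᵥ (Y · ω)) μ := by
  simp only [dotProduct_mulVec_self]
  exact integrable_finsetSum _ fun a _ => integrable_finsetSum _ fun b _ =>
    ((hY a).integrable_mul (hY b)).const_mul _

lemma integrable_dotProduct_mulVec_mul (hY : ∀ a, MemLp (Y a) 4 μ) (M N : Matrix ι ι ℝ) :
    Integrable (fun ω => ((Y · ω) ⬝ᵥ M *ᵥ (Y · ω)) * ((Y · ω) ⬝ᵥ N *ᵥ (Y · ω))) μ := by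
  simp only [dotProduct_mulVec_self_mul]
  exact integrable_finsetSum _ fun a _ => integrable_finsetSum _ fun b _ =>
    integrable_finsetSum _ fun c _ => integrable_finsetSum _ fun d _ =>
    (integrable_mul_mul_mul hY a b c d).const_mul _

variable [DecidableEq ι]

lemma ProbabilityTheory.iIndepFun.integral_dotProduct_mulVec (hindep : iIndepFun Y μ)
    (hY : ∀ a, MemLp (Y a) 2 μ) (hmean : ∀ a, ∫ ω, Y a ω ∂μ = 0)
    (hvar : ∀ a, ∫ ω, Y a ω ^ 2 ∂μ = 1) (M : Matrix ι ι ℝ) :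
    ∫ ω, (Y · ω) ⬝ᵥ M *ᵥ (Y · ω) ∂μ = trace M := by
  have hint : ∀ a b, Integrable (fun ω => M a b * (Y a ω * Y b ω)) μ := fun a b =>
    ((hY a).integrable_mul (hY b)).const_mul _
  simp only [dotProduct_mulVec_self]
  rw [integral_finsetSum _ fun a _ => integrable_finsetSum _ fun b _ => hint a b]
  simp_rw [integral_finsetSum _ fun b _ => hint _ b, integral_const_mul,
    hindep.integral_mul_eq_ite (fun a => (hY a).1) hmean hvar]
  simp [trace]

lemma ProbabilityTheory.iIndepFun.integral_dotProduct_mulVec_mul (hindep : iIndepFun Y μ)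
    (hY : ∀ a, MemLp (Y a) 4 μ) (hmean : ∀ a, ∫ ω, Y a ω ∂μ = 0)
    (hvar : ∀ a, ∫ ω, Y a ω ^ 2 ∂μ = 1) {ν : ℝ} (hfour : ∀ a, ∫ ω, Y a ω ^ 4 ∂μ = ν)
    (M N : Matrix ι ι ℝ) :
    ∫ ω, ((Y · ω) ⬝ᵥ M *ᵥ (Y · ω)) * ((Y · ω) ⬝ᵥ N *ᵥ (Y · ω)) ∂μ
      = trace M * trace N + trace (M * N) + trace (M * Nᵀ) + (ν - 3) * trace (M ⊙ N) := by
  have hint : ∀ a b c d, Integrable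
      (fun ω => M a b * N c d * (Y a ω * Y b ω * Y c ω * Y d ω)) μ := fun a b c d =>
    (integrable_mul_mul_mul hY a b c d).const_mul _
  simp only [dotProduct_mulVec_self_mul]
  rw [integral_finsetSum _ fun a _ => integrable_finsetSum _ fun b _ =>
    integrable_finsetSum _ fun c _ => integrable_finsetSum _ fun d _ => hint a b c d]
  simp_rw [integral_finsetSum _ fun b _ => integrable_finsetSum _ fun c _ =>
    integrable_finsetSum _ fun d _ => hint _ b c d,
    integral_finsetSum _ fun c _ => integrable_finsetSum _ fun d _ => hint _ _ c d,
    integral_finsetSum _ fun d _ => hint _ _ _ d, integral_const_mul,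
    hindep.integral_mul_mul_mul_eq (fun a => (hY a).1) hmean hvar hfour]
  simp only [trace, diag_apply, mul_apply, transpose_apply, hadamard, of_apply, mul_add, mul_ite,
    ite_mul, ite_and, ite_self, mul_one, mul_zero, one_mul, zero_mul, mul_comm, Finset.mul_sum,
    Finset.sum_add_distrib, Finset.sum_ite_eq, Finset.sum_ite_irrel, Finset.sum_const_zero,
    Finset.mem_univ, if_true, add_left_inj]
  rw [Finset.sum_comm]
  ring

end QuadraticForms

section SampleCovariance

variable {Ω τ m n : Type*} [MeasurableSpace Ω] {μ : Measure Ω} [Fintype τ] [Fintype m]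
  [Fintype n] [DecidableEq τ] [DecidableEq m] {X : τ → Ω → Matrix m n ℝ}

lemma integrable_trace_sum_mul_mul_transpose (hX : ∀ t i j, MemLp (fun ω => X t ω i j) 2 μ)
    (S : Matrix n n ℝ) : Integrable (fun ω => trace (∑ t, X t ω * S * (X t ω)ᵀ)) μ := by
  simp only [trace_sum_mul_mul_transpose]
  exact integrable_finsetSum _ fun i _ =>
    integrable_dotProduct_mulVec (fun a : τ × m × n => hX a.1 a.2.1 a.2.2) _

lemma integrable_trace_sq_sum_mul_mul_transpose (hX : ∀ t i j, MemLp (fun ω => X t ω i j) 4 μ)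
    (S : Matrix n n ℝ) :
    Integrable (fun ω => trace ((∑ t, X t ω * S * (X t ω)ᵀ) * ∑ t, X t ω * S * (X t ω)ᵀ)) μ := by
  simp only [trace_sq_sum_mul_mul_transpose]
  exact integrable_finsetSum _ fun i _ => integrable_finsetSum _ fun i' _ =>
    integrable_dotProduct_mulVec_mul (fun a : τ × m × n => hX a.1 a.2.1 a.2.2) _ _

variable [DecidableEq n]

lemma ProbabilityTheory.iIndepFun.integral_trace_sum_mul_mul_transpose
    (hindep : iIndepFun (fun (a : τ × m × n) ω => X a.1 ω a.2.1 a.2.2) μ)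
    (hX : ∀ t i j, MemLp (fun ω => X t ω i j) 2 μ) (hmean : ∀ t i j, ∫ ω, X t ω i j ∂μ = 0)
    (hvar : ∀ t i j, ∫ ω, X t ω i j ^ 2 ∂μ = 1) (S : Matrix n n ℝ) :
    ∫ ω, trace (∑ t, X t ω * S * (X t ω)ᵀ) ∂μ = Fintype.card τ * Fintype.card m * trace S := by
  have hY : ∀ a : τ × m × n, MemLp (fun ω => X a.1 ω a.2.1 a.2.2) 2 μ :=
    fun a => hX a.1 a.2.1 a.2.2
  simp only [trace_sum_mul_mul_transpose]
  rw [integral_finsetSum _ fun i _ => integrable_dotProduct_mulVec hY _]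
  simp only [hindep.integral_dotProduct_mulVec hY (fun a => hmean a.1 a.2.1 a.2.2)
    (fun a => hvar a.1 a.2.1 a.2.2), trace_one_kronecker_single_kronecker, if_true,
    Finset.sum_const, Finset.card_univ, nsmul_eq_mul]
  ring

lemma ProbabilityTheory.iIndepFun.integral_trace_sq_sum_mul_mul_transpose
    (hindep : iIndepFun (fun (a : τ × m × n) ω => X a.1 ω a.2.1 a.2.2) μ)
    (hX : ∀ t i j, MemLp (fun ω => X t ω i j) 4 μ) (hmean : ∀ t i j, ∫ ω, X t ω i j ∂μ = 0)
    (hvar : ∀ t i j, ∫ ω, X t ω i j ^ 2 ∂μ = 1) {ν : ℝ}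
    (hfour : ∀ t i j, ∫ ω, X t ω i j ^ 4 ∂μ = ν) (S : Matrix n n ℝ) :
    ∫ ω, trace ((∑ t, X t ω * S * (X t ω)ᵀ) * ∑ t, X t ω * S * (X t ω)ᵀ) ∂μ
      = Fintype.card τ ^ 2 * Fintype.card m * trace S ^ 2
        + Fintype.card τ * Fintype.card m ^ 2 * trace (S * S)
        + Fintype.card τ * Fintype.card m * trace (S * Sᵀ)
        + (ν - 3) * Fintype.card τ * Fintype.card m * trace (S ⊙ S) := by
  have hY : ∀ a : τ × m × n, MemLp (fun ω => X a.1 ω a.2.1 a.2.2) 4 μ :=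
    fun a => hX a.1 a.2.1 a.2.2
  simp only [trace_sq_sum_mul_mul_transpose]
  rw [integral_finsetSum _ fun i _ => integrable_finsetSum _ fun i' _ =>
    integrable_dotProduct_mulVec_mul hY _ _]
  simp_rw [integral_finsetSum _ fun i' _ => integrable_dotProduct_mulVec_mul hY _ _]
  simp only [hindep.integral_dotProduct_mulVec_mul hY (fun a => hmean a.1 a.2.1 a.2.2)
    (fun a => hvar a.1 a.2.1 a.2.2) (fun a => hfour a.1 a.2.1 a.2.2),
    trace_one_kronecker_single_kronecker, trace_one_kronecker_single_kronecker_mul,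
    trace_one_kronecker_single_kronecker_mul_transpose,
    trace_one_kronecker_single_kronecker_hadamard]
  simp only [mul_ite, ite_mul, zero_mul, mul_zero, Finset.sum_add_distrib, Finset.sum_ite_eq',
    Finset.sum_ite_eq, Finset.mem_univ, if_true, Finset.sum_const, Finset.card_univ, nsmul_eq_mul]
  ring

end SampleCovariance

theorem expectation_trace_square_renormalized_general
    {Ω : Type*} [MeasurableSpace Ω] (μ : Measure Ω) [IsProbabilityMeasure μ]
    (T p q : ℕ) (hT : 0 < T) (hp : 0 < p) (hq : 0 < q)
    (X : Fin T → Ω → Matrix (Fin p) (Fin q) ℝ)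
    (Sv : Matrix (Fin q) (Fin q) ℝ) (hSvsym : Sv.IsSymm)
    (htr : Sv.trace = (q : ℝ)) (ν : ℝ)
    (hL4 : ∀ t i j, MemLp (fun ω => X t ω i j) 4 μ)
    (hindep : iIndepFun
      (fun (a : Fin T × Fin p × Fin q) ω => X a.1 ω a.2.1 a.2.2) μ)
    (hmean : ∀ t i j, ∫ ω, X t ω i j ∂μ = 0)
    (hvar : ∀ t i j, ∫ ω, (X t ω i j) ^ 2 ∂μ = 1)
    (hfour : ∀ t i j, ∫ ω, (X t ω i j) ^ 4 ∂μ = ν)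
    (Stilde : Ω → Matrix (Fin p) (Fin p) ℝ)
    (hS : ∀ ω, Stilde ω = Real.sqrt ((T * q : ℝ) / p) •
        (((T * q : ℝ))⁻¹ • ∑ t, X t ω * Sv * (X t ω)ᵀ - 1)) :
    ∫ ω, (Stilde ω * Stilde ω).trace ∂μ
      = (ν - 3) * (q : ℝ)⁻¹ * ∑ j, (Sv j j) ^ 2
        + ((p : ℝ) + 1) * (q : ℝ)⁻¹ * ∑ i, ∑ j, (Sv i j) ^ 2 := by
  have hL2 : ∀ t i j, MemLp (fun ω => X t ω i j) 2 μ :=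
    fun t i j => (hL4 t i j).mono_exponent (by norm_num)
  have hpointwise : ∀ ω, (Stilde ω * Stilde ω).trace = (T * q / p : ℝ) *
      (((T * q : ℝ))⁻¹ ^ 2 * trace ((∑ t, X t ω * Sv * (X t ω)ᵀ) * ∑ t, X t ω * Sv * (X t ω)ᵀ)
        - 2 * ((T * q : ℝ))⁻¹ * trace (∑ t, X t ω * Sv * (X t ω)ᵀ) + p) := fun ω => by
    rw [hS ω, trace_mul_self_sqrt_smul_smul_sub_one (by positivity), Fintype.card_fin]
  have hfrob : trace (Sv * Sv) = ∑ i, ∑ j, Sv i j ^ 2 := by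
    rw [← trace_mul_transpose_self, hSvsym.eq]
  have hint₁ := integrable_trace_sum_mul_mul_transpose hL2 Sv
  have hint₂ := integrable_trace_sq_sum_mul_mul_transpose hL4 Sv
  rw [integral_congr_ae (ae_of_all _ hpointwise), integral_const_mul,
    integral_add ?_ (integrable_const _), integral_sub (hint₂.const_mul _) (hint₁.const_mul _),
    integral_const_mul, integral_const_mul, integral_const,
    hindep.integral_trace_sq_sum_mul_mul_transpose hL4 hmean hvar hfour,
    hindep.integral_trace_sum_mul_mul_transpose hL2 hmean hvar, hfrob,
    trace_mul_transpose_self, trace_hadamard_self, htr]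
  · have : (T : ℝ) ≠ 0 := by positivity
    have : (p : ℝ) ≠ 0 := by positivity
    have : (q : ℝ) ≠ 0 := by positivity
    simp only [Fintype.card_fin, probReal_univ, smul_eq_mul, one_mul]
    field_simp
    ring
  · exact (hint₂.const_mul _).sub (hint₁.const_mul _)

/-- For `S̃ = √(Tq/p) ((Tq)⁻¹ ∑_t X_t Σ_V X_tᵀ − I_p)` with jointly
i.i.d. entries (mean 0, variance 1, fourth moment ν₄) and `Σ_V` symmetric PSD with
`tr Σ_V = q`, one has `E tr(S̃²) = (ν₄−3) q⁻¹ ∑_j (Σ_V)_jj² + (p+1) q⁻¹ ‖Σ_V‖_F²`. -/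
theorem expectation_trace_square_renormalized
    {Ω : Type*} [MeasurableSpace Ω] (μ : Measure Ω) [IsProbabilityMeasure μ]
    (T p q : ℕ) (hT : 0 < T) (hp : 0 < p) (hq : 0 < q)
    (X : Fin T → Ω → Matrix (Fin p) (Fin q) ℝ)
    (Sv : Matrix (Fin q) (Fin q) ℝ) (hSvsym : Sv.IsSymm) (hSvpsd : Sv.PosSemidef)
    (htr : Sv.trace = (q : ℝ)) (ν : ℝ)
    (hmeas : ∀ t i j, Measurable fun ω => X t ω i j)
    (hL4 : ∀ t i j, MemLp (fun ω => X t ω i j) 4 μ)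
    (hindep : iIndepFun
      (fun (a : Fin T × Fin p × Fin q) ω => X a.1 ω a.2.1 a.2.2) μ)
    (hident : ∀ a b : Fin T × Fin p × Fin q,
      IdentDistrib (fun ω => X a.1 ω a.2.1 a.2.2) (fun ω => X b.1 ω b.2.1 b.2.2) μ μ)
    (hmean : ∀ t i j, ∫ ω, X t ω i j ∂μ = 0)
    (hvar : ∀ t i j, ∫ ω, (X t ω i j) ^ 2 ∂μ = 1)
    (hfour : ∀ t i j, ∫ ω, (X t ω i j) ^ 4 ∂μ = ν)
    (Stilde : Ω → Matrix (Fin p) (Fin p) ℝ)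
    (hS : ∀ ω, Stilde ω = Real.sqrt ((T * q : ℝ) / p) •
        (((T * q : ℝ))⁻¹ • ∑ t, X t ω * Sv * (X t ω)ᵀ - 1)) :
    ∫ ω, (Stilde ω * Stilde ω).trace ∂μ
      = (ν - 3) * (q : ℝ)⁻¹ * ∑ j, (Sv j j) ^ 2
        + ((p : ℝ) + 1) * (q : ℝ)⁻¹ * ∑ i, ∑ j, (Sv i j) ^ 2 :=
  expectation_trace_square_renormalized_general μ T p q hT hp hq X Sv hSvsym htr ν hL4 hindep hmean
    hvar hfour Stilde hS
end

section
/- Let A be a real symmetric (p−1)×(p−1) matrix, q ∈ ℝ^{p−1}, a ∈ ℝ, and z = u + iv with v > 0. Then | (1 + qᵀ(A − zI)⁻² q) / (z − a + qᵀ(A − zI)⁻¹ q) | ≤ 1/v. -/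
/-!
Diagonalise `A = ∑ θⱼ ξⱼ ξⱼᵀ` and put `mⱼ = ⟨q, ξⱼ⟩²`, `rⱼ = (θⱼ - z)⁻¹`. The numerator is
`1 + ∑ mⱼ rⱼ²`, of norm at most `S = 1 + ∑ mⱼ |rⱼ|²`, while `Im rⱼ = v |rⱼ|²` makes the imaginary
part of the denominator exactly `v S`. Hence the ratio is at most `S / (v S) = 1 / v`.
-/

open Matrix Unitary

section Spectral

variable {𝕜 : Type*} [RCLike 𝕜] {n : Type*} [Fintype n] [DecidableEq n]

theorem star_dotProduct_conjStarAlgAut_diagonal_mulVec (U : unitaryGroup n 𝕜) (d x : n → 𝕜) :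
    star x ⬝ᵥ conjStarAlgAut 𝕜 _ U (diagonal d) *ᵥ x =
      ∑ j, d j * ((‖(star (U : Matrix n n 𝕜) *ᵥ x) j‖ ^ 2 : ℝ) : 𝕜) := by
  have hvec : star x ᵥ* (U : Matrix n n 𝕜) = star (star (U : Matrix n n 𝕜) *ᵥ x) := by
    rw [star_mulVec, star_eq_conjTranspose, conjTranspose_conjTranspose]
  rw [conjStarAlgAut_apply, ← mulVec_mulVec, ← mulVec_mulVec, dotProduct_mulVec, hvec]
  simp only [dotProduct, mulVec_diagonal, Pi.star_apply, RCLike.star_def]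
  refine Finset.sum_congr rfl fun j _ => ?_
  rw [RCLike.ofReal_pow, ← RCLike.conj_mul]
  ring

theorem inv_conjStarAlgAut_diagonal (U : unitaryGroup n 𝕜) {d : n → 𝕜} (hd : ∀ j, d j ≠ 0) :
    (conjStarAlgAut 𝕜 _ U (diagonal d))⁻¹ = conjStarAlgAut 𝕜 _ U (diagonal d⁻¹) := by
  refine inv_eq_right_inv ?_
  rw [← map_mul, diagonal_mul_diagonal]
  simp [mul_inv_cancel₀ (hd _)]

theorem Matrix.IsHermitian.sub_smul_one_eq_conjStarAlgAut {A : Matrix n n 𝕜} (hA : A.IsHermitian)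
    (z : 𝕜) :
    A - z • 1 = conjStarAlgAut 𝕜 _ hA.eigenvectorUnitary
      (diagonal fun j => (hA.eigenvalues j : 𝕜) - z) := by
  have hdiag : (diagonal fun j => (hA.eigenvalues j : 𝕜) - z) =
      diagonal (RCLike.ofReal ∘ hA.eigenvalues) - z • 1 := by
    rw [smul_one_eq_diagonal, diagonal_sub]; rfl
  conv_lhs => rw [hA.spectral_theorem]
  rw [hdiag, map_sub, map_smul, map_one]

theorem Matrix.IsHermitian.inv_sub_smul_one_eq_conjStarAlgAut {A : Matrix n n 𝕜}
    (hA : A.IsHermitian) {z : 𝕜} (hz : ∀ j, (hA.eigenvalues j : 𝕜) ≠ z) :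
    (A - z • 1)⁻¹ = conjStarAlgAut 𝕜 _ hA.eigenvectorUnitary
      (diagonal fun j => ((hA.eigenvalues j : 𝕜) - z)⁻¹) := by
  rw [hA.sub_smul_one_eq_conjStarAlgAut,
    inv_conjStarAlgAut_diagonal _ fun j => sub_ne_zero.2 (hz j)]
  rfl

end Spectral

theorem Complex.im_inv_ofReal_sub (θ : ℝ) (z : ℂ) :
    ((θ - z)⁻¹).im = z.im * ‖((θ : ℂ) - z)⁻¹‖ ^ 2 := by
  rw [inv_im, norm_inv, inv_pow, normSq_eq_norm_sq]
  simp [div_eq_mul_inv]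

theorem Complex.norm_one_add_sum_inv_sq_div_le_one_div_im {ι : Type*} [Fintype ι]
    (θ m : ι → ℝ) (hm : ∀ j, 0 ≤ m j) (a : ℝ) {z : ℂ} (hz : 0 < z.im) :
    ‖(1 + ∑ j, ((θ j : ℂ) - z)⁻¹ ^ 2 * m j) / (z - a + ∑ j, ((θ j : ℂ) - z)⁻¹ * m j)‖
      ≤ 1 / z.im := by
  set S := 1 + ∑ j, ‖((θ j : ℂ) - z)⁻¹‖ ^ 2 * m j
  have hS : 0 < S := by
    have := Finset.sum_nonneg fun j (_ : j ∈ Finset.univ) =>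
      mul_nonneg (sq_nonneg ‖((θ j : ℂ) - z)⁻¹‖) (hm j)
    linarith
  have hnum : ‖1 + ∑ j, ((θ j : ℂ) - z)⁻¹ ^ 2 * m j‖ ≤ S := by
    refine (norm_add_le _ _).trans ?_
    rw [norm_one]
    refine add_le_add le_rfl ((norm_sum_le _ _).trans_eq (Finset.sum_congr rfl fun j _ => ?_))
    rw [norm_mul, norm_pow, norm_real, Real.norm_of_nonneg (hm j)]
  have hden : z.im * S = (z - a + ∑ j, ((θ j : ℂ) - z)⁻¹ * m j).im := by
    simp only [add_im, sub_im, ofReal_im, im_sum, im_mul_ofReal, im_inv_ofReal_sub, S,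
      mul_add, Finset.mul_sum, mul_assoc]
    ring
  calc _ = ‖1 + ∑ j, ((θ j : ℂ) - z)⁻¹ ^ 2 * m j‖ /
          ‖z - a + ∑ j, ((θ j : ℂ) - z)⁻¹ * m j‖ := norm_div _ _
    _ ≤ S / (z.im * S) := by
        gcongr
        rw [hden]
        exact (le_abs_self _).trans (abs_im_le_norm _)
    _ = 1 / z.im := by field_simp

/-- For real symmetric `A`, real vector `q`, real `a` and
`z = u + iv` with `v > 0`,
`|(1 + qᵀ(A−zI)⁻²q) / (z − a + qᵀ(A−zI)⁻¹q)| ≤ 1/v`. -/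
theorem resolvent_quadratic_ratio_bound
    {n : ℕ} (A : Matrix (Fin n) (Fin n) ℝ) (hA : A.IsSymm)
    (q : Fin n → ℝ) (a : ℝ) (z : ℂ) (hz : 0 < z.im) :
    ‖((1 + (fun i => (q i : ℂ)) ⬝ᵥ
            (((A.map (Complex.ofReal) - z • 1)⁻¹ *
              (A.map (Complex.ofReal) - z • 1)⁻¹).mulVec fun i => (q i : ℂ))) /
          (z - (a : ℂ) + (fun i => (q i : ℂ)) ⬝ᵥ
            ((A.map (Complex.ofReal) - z • 1)⁻¹).mulVec fun i => (q i : ℂ)))‖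
      ≤ 1 / z.im := by
  have hM : (A.map Complex.ofReal).IsHermitian :=
    (isHermitian_iff_isSymm.2 hA).map _ fun r => by simp
  have hz_not_eig : ∀ j, (hM.eigenvalues j : ℂ) ≠ z := fun j h => by
    simpa [← h] using hz.ne'
  set x : Fin n → ℂ := fun i => q i
  have hx : star x = x := by ext; simp [x]
  have hquad (d : Fin n → ℂ) :=
    star_dotProduct_conjStarAlgAut_diagonal_mulVec hM.eigenvectorUnitary d x
  simp only [hx] at hquad
  rw [hM.inv_sub_smul_one_eq_conjStarAlgAut hz_not_eig, ← map_mul, diagonal_mul_diagonal,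
    hquad, hquad]
  simp_rw [← sq]
  exact Complex.norm_one_add_sum_inv_sq_div_le_one_div_im _ _ (fun j => sq_nonneg _) a hz
end

section
/- Let D be a p×p complex symmetric invertible matrix partitioned as D = [[d, qᵀ],[q, D₁]] where d ∈ ℂ, q ∈ ℂ^{p−1}, and D₁ is an invertible (p−1)×(p−1) matrix, and suppose the Schur complement d − qᵀ D₁⁻¹ q is nonzero. Then tr(D⁻¹) − tr(D₁⁻¹) = (1 + qᵀ D₁⁻² q) / (d − qᵀ D₁⁻¹ q). -/
open Matrix

theorem trace_fromBlocks_aux {m k : Type*} [Fintype m] [Fintype k]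
    (A : Matrix m m ℂ) (B : Matrix m k ℂ) (C : Matrix k m ℂ) (D : Matrix k k ℂ) :
    (fromBlocks A B C D).trace = A.trace + D.trace := by
  simp [Matrix.trace, Fintype.sum_sum_type]

/-- For a symmetric invertible block matrix
`D = [[d, qᵀ], [q, D₁]]` with `D₁` invertible and nonzero Schur complement,
`tr(D⁻¹) − tr(D₁⁻¹) = (1 + qᵀD₁⁻²q)/(d − qᵀD₁⁻¹q)`. -/
theorem schur_complement_trace_difference
    {n : ℕ} (d : ℂ) (q : Fin n → ℂ) (D₁ : Matrix (Fin n) (Fin n) ℂ)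
    (hsymm : D₁.IsSymm) (hD₁ : IsUnit D₁.det)
    (D : Matrix (Fin 1 ⊕ Fin n) (Fin 1 ⊕ Fin n) ℂ)
    (hD : D = Matrix.fromBlocks (Matrix.of fun _ _ => d) (Matrix.of fun _ j => q j)
        (Matrix.of fun i _ => q i) D₁)
    (hDinv : IsUnit D.det)
    (hs : d - q ⬝ᵥ D₁⁻¹.mulVec q ≠ 0) :
    D⁻¹.trace - D₁⁻¹.trace
      = (1 + q ⬝ᵥ (D₁⁻¹ * D₁⁻¹).mulVec q) / (d - q ⬝ᵥ D₁⁻¹.mulVec q) := by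
  set s : ℂ := d - q ⬝ᵥ D₁⁻¹.mulVec q with hs_def
  set A : Matrix (Fin 1) (Fin 1) ℂ := Matrix.of fun _ _ => d
  set B : Matrix (Fin 1) (Fin n) ℂ := Matrix.of fun _ j => q j
  set C : Matrix (Fin n) (Fin 1) ℂ := Matrix.of fun i _ => q i
  haveI iD₁ : Invertible D₁ := Matrix.invertibleOfIsUnitDet D₁ hD₁
  have hinv : ⅟D₁ = D₁⁻¹ := invOf_eq_nonsing_inv D₁
  have hS : A - B * ⅟D₁ * C = Matrix.of fun _ _ => s := by
    rw [hinv]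
    ext i j
    simp only [A, B, C, Matrix.sub_apply, Matrix.of_apply, Matrix.mul_apply, dotProduct,
      Matrix.mulVec, Finset.mul_sum, Finset.sum_mul, hs_def]
    congr 1
    rw [Finset.sum_comm]
    exact Finset.sum_congr rfl fun _ _ => Finset.sum_congr rfl fun _ _ => by ring
  haveI iS : Invertible (A - B * ⅟D₁ * C) := by
    rw [hS]
    apply Matrix.invertibleOfIsUnitDet
    rw [Matrix.det_fin_one]
    exact isUnit_iff_ne_zero.mpr hs
  haveI iD : Invertible D := (Matrix.isUnit_iff_isUnit_det D).mpr hDinv |>.invertible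
  have hDi : D⁻¹ = ⅟D := (invOf_eq_nonsing_inv D).symm
  have hSi : ⅟(A - B * ⅟D₁ * C) = (s⁻¹ : ℂ) • (1 : Matrix (Fin 1) (Fin 1) ℂ) := by
    have h1 : (A - B * ⅟D₁ * C) * ((s⁻¹ : ℂ) • (1 : Matrix (Fin 1) (Fin 1) ℂ)) = 1 := by
      rw [hS]
      ext i j
      simp [Matrix.mul_apply, Matrix.one_apply, Fin.eq_zero i, Fin.eq_zero j,
        mul_inv_cancel₀ hs]
    exact invOf_eq_right_inv h1
  haveI iDb : Invertible (fromBlocks A B C D₁) := by rw [← hD]; exact iD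
  have key : ⅟D = fromBlocks (⅟ (A - B * ⅟D₁ * C)) (-(⅟ (A - B * ⅟D₁ * C) * B * ⅟D₁))
      (-(⅟D₁ * C * ⅟ (A - B * ⅟D₁ * C))) (⅟D₁ + ⅟D₁ * C * ⅟ (A - B * ⅟D₁ * C) * B * ⅟D₁) := by
    subst hD
    exact Matrix.invOf_fromBlocks₂₂_eq A B C D₁
  rw [hDi, key, trace_fromBlocks_aux, hSi, hinv]
  have htr1 : ((s⁻¹ : ℂ) • (1 : Matrix (Fin 1) (Fin 1) ℂ)).trace = s⁻¹ := by
    simp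
  have htr2 : (D₁⁻¹ * C * ((s⁻¹ : ℂ) • (1 : Matrix (Fin 1) (Fin 1) ℂ)) * B * D₁⁻¹).trace
      = (q ⬝ᵥ (D₁⁻¹ * D₁⁻¹).mulVec q) * s⁻¹ := by
    rw [show D₁⁻¹ * C * ((s⁻¹ : ℂ) • (1 : Matrix (Fin 1) (Fin 1) ℂ)) * B * D₁⁻¹
        = (D₁⁻¹ * C * ((s⁻¹ : ℂ) • (1 : Matrix (Fin 1) (Fin 1) ℂ))) * (B * D₁⁻¹) by
      simp [Matrix.mul_assoc]]
    rw [Matrix.trace_mul_comm]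
    simp only [Matrix.mul_smul, Matrix.smul_mul, Matrix.mul_one, Matrix.trace_smul]
    rw [show B * D₁⁻¹ * (D₁⁻¹ * C) = B * (D₁⁻¹ * D₁⁻¹) * C by simp [Matrix.mul_assoc]]
    rw [smul_eq_mul, mul_comm]
    congr 1
    rw [Matrix.trace_fin_one]
    set M := D₁⁻¹ * D₁⁻¹ with hM
    clear_value M
    simp only [B, C, Matrix.of_apply, Matrix.mul_apply, dotProduct, Matrix.mulVec,
      Finset.mul_sum, Finset.sum_mul]
    rw [Finset.sum_comm]
    exact Finset.sum_congr rfl fun _ _ => Finset.sum_congr rfl fun _ _ => by ring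
  rw [htr1, Matrix.trace_add, htr2]
  field_simp
  ring
end

section
/- Let Φ be a p×q random matrix with i.i.d. entries of mean 0, variance 1 and fourth moment ν̃₄ < ∞, and let A be a deterministic p×p real symmetric matrix. Then E ‖ A^{1/2}(Φ Φᵀ − q I_p) A^{1/2} ‖_F² = q [ (ν̃₄ − 3) ∑_{j=1}^p A_{jj}² + ‖A‖_F² + (tr A)² ], where A is additionally assumed positive semidefinite so that A^{1/2} is defined. -/
open MeasureTheory ProbabilityTheory Matrix

/-- The square root of a positive semidefinite matrix, as defined in Mathlib (Dec 2024),
since removed from Mathlib. -/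
noncomputable def Matrix.PosSemidef.sqrt {n : Type*} [Fintype n] [DecidableEq n] {𝕜 : Type*}
    [RCLike 𝕜] [PartialOrder 𝕜] [StarOrderedRing 𝕜] {A : Matrix n n 𝕜} (hA : A.PosSemidef) : Matrix n n 𝕜 :=
  (hA.1.eigenvectorUnitary : Matrix n n 𝕜) * diagonal ((↑) ∘ (√·) ∘ hA.1.eigenvalues) *
    (star (hA.1.eigenvectorUnitary : Matrix n n 𝕜))

/-!
With `S = A^{1/2}` and `M = Φ Φᵀ - q I`, both symmetric, `‖S M S‖_F² = tr (M A M A)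
= ∑ A_bc A_da M_ab M_cd`. The entry `M_ab` is the Gram entry `G_ab = ∑_t Φ_at Φ_bt` minus its mean
`q δ_ab`, so `E[M_ab M_cd] = cov(G_ab, G_cd) = ∑_{t,s} cov(Φ_at Φ_bt, Φ_cs Φ_ds)`. Entries in
different columns are independent, so only `t = s` contributes, and the fourth-moment formula for
independent standardized variables gives `δ_ac δ_bd + δ_ad δ_bc + (ν - 3) δ_ab δ_bc δ_cd` for each
column. Contracting with `A_bc A_da` yields `‖A‖_F²`, `(tr A)²` and `(ν - 3) ∑ A_jj²`.
-/

namespace Matrix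

namespace PosSemidef

variable {n : Type*} [Fintype n] [DecidableEq n] {A : Matrix n n ℝ}

lemma transpose_sqrt (hA : A.PosSemidef) : hA.sqrtᵀ = hA.sqrt := by
  simp only [PosSemidef.sqrt, transpose_mul, star_eq_conjTranspose, Matrix.mul_assoc,
    conjTranspose_eq_transpose_of_trivial, transpose_transpose, diagonal_transpose]

lemma sqrt_mul_self (hA : A.PosSemidef) : hA.sqrt * hA.sqrt = A := by
  set U : Matrix n n ℝ := (hA.1.eigenvectorUnitary : Matrix n n ℝ)
  set D : Matrix n n ℝ := diagonal ((RCLike.ofReal : ℝ → ℝ) ∘ (√·) ∘ hA.1.eigenvalues)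
  have hD : D * D = diagonal ((RCLike.ofReal : ℝ → ℝ) ∘ hA.1.eigenvalues) := by
    rw [diagonal_mul_diagonal]
    congr 1
    funext i
    simp [Real.mul_self_sqrt (hA.eigenvalues_nonneg i)]
  have hU : star U * U = 1 := Unitary.coe_star_mul_self hA.1.eigenvectorUnitary
  calc hA.sqrt * hA.sqrt = U * (D * (star U * U) * D) * star U := by
        simp only [PosSemidef.sqrt, U, D, Matrix.mul_assoc]
    _ = A := by
        rw [hU, Matrix.mul_one, hD]
        conv_rhs => rw [hA.1.spectral_theorem, Unitary.conjStarAlgAut_apply]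

end PosSemidef

lemma sum_sq_apply_eq_trace_mul_transpose {m n R : Type*} [Fintype m] [Fintype n] [CommSemiring R]
    (B : Matrix m n R) : ∑ i, ∑ j, B i j ^ 2 = trace (B * Bᵀ) := by
  simp [trace, mul_apply, sq]

lemma sum_sq_mul_mul_apply_eq_trace {n R : Type*} [Fintype n] [CommSemiring R] {S M : Matrix n n R}
    (hS : Sᵀ = S) (hM : Mᵀ = M) :
    ∑ i, ∑ j, (S * M * S) i j ^ 2 = trace (M * (S * S) * M * (S * S)) := by
  rw [sum_sq_apply_eq_trace_mul_transpose, transpose_mul, transpose_mul, hS, hM]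
  simp only [Matrix.mul_assoc]
  rw [trace_mul_comm]
  simp only [Matrix.mul_assoc]

lemma trace_mul_mul_mul_mul {n R : Type*} [Fintype n] [CommSemiring R] (M A N B : Matrix n n R) :
    trace (M * A * N * B) = ∑ a, ∑ b, ∑ c, ∑ d, M a b * A b c * N c d * B d a := by
  rw [Matrix.mul_assoc]
  simp only [trace, diag, mul_apply, Finset.sum_mul_sum, ← mul_assoc]
  exact Finset.sum_congr rfl fun a _ => Finset.sum_comm

end Matrix

/-- Wick's two pairings plus the fourth-cumulant correction `ν - 3`. -/
def wickCov {ι : Type*} [DecidableEq ι] (ν : ℝ) (a b c d : ι) : ℝ :=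
  (if a = c then 1 else 0) * (if b = d then 1 else 0)
    + (if a = d then 1 else 0) * (if b = c then 1 else 0)
    + (ν - 3) * ((if a = b then 1 else 0) * (if b = c then 1 else 0) * (if c = d then 1 else 0))

lemma Matrix.sum_mul_mul_wickCov {m : Type*} [Fintype m] [DecidableEq m] (A : Matrix m m ℝ)
    (ν : ℝ) : ∑ a, ∑ b, ∑ c, ∑ d, A b c * A d a * wickCov ν a b c d
      = (ν - 3) * ∑ j, A j j ^ 2 + ∑ i, ∑ j, A i j ^ 2 + A.trace ^ 2 := by
  simp only [wickCov, mul_add, Finset.sum_add_distrib, mul_ite, mul_one, mul_zero,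
    Finset.sum_ite_irrel, Finset.sum_const_zero, Finset.sum_ite_eq, Finset.mem_univ, if_true]
  have hF : ∑ a, ∑ b, A b a * A b a = ∑ i, ∑ j, A i j ^ 2 := by
    rw [Finset.sum_comm]; simp only [sq]
  have hT : ∑ a, ∑ b, A b b * A a a = A.trace ^ 2 := by
    rw [Finset.sum_comm, trace, sq, Finset.sum_mul_sum]; rfl
  have hD : ∑ a, A a a * A a a * (ν - 3) = (ν - 3) * ∑ j, A j j ^ 2 := by
    rw [Finset.mul_sum]; exact Finset.sum_congr rfl fun _ _ => by ring
  rw [hF, hT, hD]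
  ring

instance ENNReal.HolderTriple.instFourFourTwo : ENNReal.HolderTriple 4 4 2 := ⟨by
  rw [← two_mul, show (4 : ENNReal) = 2 * 2 by norm_num, ENNReal.mul_inv (by simp) (by simp),
    ← mul_assoc, ENNReal.mul_inv_cancel (by simp) (by simp), one_mul]⟩

section IndependentMoments

variable {Ω ι : Type*} [MeasurableSpace Ω] {μ : Measure Ω} [IsProbabilityMeasure μ]
  [Fintype ι] [DecidableEq ι] {X : ι → Ω → ℝ}

lemma ProbabilityTheory.iIndepFun.integral_list_prod (hX : iIndepFun X μ)
    (hXm : ∀ i, AEMeasurable (X i) μ) (l : List ι) :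
    ∫ ω, (l.map (X · ω)).prod ∂μ = ∏ i ∈ l.toFinset, ∫ ω, X i ω ^ l.count i ∂μ := by
  have hcount : ∀ f : ι → ℝ, ∏ i ∈ l.toFinset, f i ^ l.count i = ∏ i, f i ^ l.count i :=
    fun f => Finset.prod_subset (Finset.subset_univ _) fun i _ hi => by
      rw [List.count_eq_zero_of_not_mem (by simpa using hi), pow_zero]
  calc ∫ ω, (l.map (X · ω)).prod ∂μ = ∫ ω, ∏ i, X i ω ^ l.count i ∂μ := by
        simp only [Finset.prod_list_map_count, hcount]
    _ = ∏ i, ∫ ω, X i ω ^ l.count i ∂μ :=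
        hX.integral_fun_prod_comp hXm fun i => (continuous_pow _).aestronglyMeasurable
    _ = ∏ i ∈ l.toFinset, ∫ ω, X i ω ^ l.count i ∂μ := by
        refine (Finset.prod_subset (Finset.subset_univ _) fun i _ hi => ?_).symm
        simp [List.count_eq_zero_of_not_mem (by simpa using hi)]

variable {ν : ℝ}

lemma ProbabilityTheory.iIndepFun.integral_mul_eq_ite_s17 (hX : iIndepFun X μ)
    (hXm : ∀ i, AEMeasurable (X i) μ) (h1 : ∀ i, ∫ ω, X i ω ∂μ = 0)
    (h2 : ∀ i, ∫ ω, X i ω ^ 2 ∂μ = 1) (u v : ι) :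
    ∫ ω, X u ω * X v ω ∂μ = if u = v then 1 else 0 := by
  have h := hX.integral_list_prod hXm [u, v]
  simp only [List.map, List.prod_cons, List.prod_nil, mul_one] at h
  rw [h]
  rcases eq_or_ne u v with rfl | huv
  · simp [h2]
  · simp [huv, h1]

lemma ProbabilityTheory.iIndepFun.integral_mul_mul_mul_eq_add_wickCov (hX : iIndepFun X μ)
    (hXm : ∀ i, AEMeasurable (X i) μ) (h1 : ∀ i, ∫ ω, X i ω ∂μ = 0)
    (h2 : ∀ i, ∫ ω, X i ω ^ 2 ∂μ = 1) (h4 : ∀ i, ∫ ω, X i ω ^ 4 ∂μ = ν) (u v w z : ι) :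
    ∫ ω, X u ω * X v ω * X w ω * X z ω ∂μ =
      (if u = v then 1 else 0) * (if w = z then 1 else 0) + wickCov ν u v w z := by
  have h := hX.integral_list_prod hXm [u, v, w, z]
  simp only [List.map, List.prod_cons, List.prod_nil, mul_one, ← mul_assoc] at h
  rw [h, wickCov]
  clear h
  -- fix one orientation of each equation, so that `simp_all` can use the case hypotheses
  have e₁ : (v = u) = (u = v) := propext eq_comm
  have e₂ : (w = u) = (u = w) := propext eq_comm
  have e₃ : (z = u) = (u = z) := propext eq_comm
  have e₄ : (w = v) = (v = w) := propext eq_comm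
  have e₅ : (z = v) = (v = z) := propext eq_comm
  have e₆ : (z = w) = (w = z) := propext eq_comm
  by_cases huv : u = v <;> by_cases huw : u = w <;> by_cases huz : u = z <;>
    by_cases hvw : v = w <;> by_cases hvz : v = z <;> by_cases hwz : w = z <;>
    subst_vars <;> simp_all [List.count_cons]
  -- only the case `u = v = w = z` is left
  ring

lemma ProbabilityTheory.iIndepFun.covariance_mul_mul_eq_wickCov (hX : iIndepFun X μ)
    (hL4 : ∀ i, MemLp (X i) 4 μ) (h1 : ∀ i, ∫ ω, X i ω ∂μ = 0)
    (h2 : ∀ i, ∫ ω, X i ω ^ 2 ∂μ = 1) (h4 : ∀ i, ∫ ω, X i ω ^ 4 ∂μ = ν) (u v w z : ι) :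
    cov[fun ω => X u ω * X v ω, fun ω => X w ω * X z ω; μ] = wickCov ν u v w z := by
  have hXm i := (hL4 i).aestronglyMeasurable.aemeasurable
  rw [covariance_eq_sub ((hL4 v).mul' (hL4 u)) ((hL4 z).mul' (hL4 w))]
  simp only [Pi.mul_apply, ← mul_assoc]
  rw [hX.integral_mul_mul_mul_eq_add_wickCov hXm h1 h2 h4, hX.integral_mul_eq_ite_s17 hXm h1 h2,
    hX.integral_mul_eq_ite_s17 hXm h1 h2]
  ring

end IndependentMoments

def centeredGram {m n : Type*} [Fintype n] [DecidableEq m] (Φ : Matrix m n ℝ) : Matrix m m ℝ :=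
  Φ * Φᵀ - (Fintype.card n : ℝ) • 1

lemma centeredGram_apply {m n : Type*} [Fintype n] [DecidableEq m] (Φ : Matrix m n ℝ) (a b : m) :
    centeredGram Φ a b = (Φ * Φᵀ) a b - Fintype.card n * if a = b then 1 else 0 := by
  simp [centeredGram, one_apply]

lemma transpose_centeredGram {m n : Type*} [Fintype n] [DecidableEq m] (Φ : Matrix m n ℝ) :
    (centeredGram Φ)ᵀ = centeredGram Φ := by
  simp [centeredGram, transpose_sub, transpose_mul]

section Gram

variable {Ω m n : Type*} [MeasurableSpace Ω] {μ : Measure Ω} [Fintype n] {Φ : Ω → Matrix m n ℝ}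
  (hL4 : ∀ i j, MemLp (fun ω => Φ ω i j) 4 μ)
include hL4

lemma memLp_mul_transpose_apply (a b : m) : MemLp (fun ω => (Φ ω * (Φ ω)ᵀ) a b) 2 μ := by
  simp only [mul_apply, transpose_apply]
  exact memLp_finsetSum _ fun t _ => (hL4 b t).mul' (r := 2) (hL4 a t)

variable [IsProbabilityMeasure μ] [DecidableEq m]

lemma memLp_centeredGram_apply (a b : m) : MemLp (fun ω => centeredGram (Φ ω) a b) 2 μ := by
  simp only [centeredGram_apply]
  exact (memLp_mul_transpose_apply hL4 a b).sub (memLp_const _)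

variable [Fintype m] [DecidableEq n] {ν : ℝ}
  (hindep : iIndepFun (fun (ij : m × n) ω => Φ ω ij.1 ij.2) μ)
  (hmean : ∀ i j, ∫ ω, Φ ω i j ∂μ = 0) (hvar : ∀ i j, ∫ ω, Φ ω i j ^ 2 ∂μ = 1)
  (hfour : ∀ i j, ∫ ω, Φ ω i j ^ 4 ∂μ = ν)
include hindep hmean hvar

lemma integral_mul_transpose_apply (a b : m) :
    ∫ ω, (Φ ω * (Φ ω)ᵀ) a b ∂μ = Fintype.card n * if a = b then 1 else 0 := by
  have hXm (ij : m × n) := (hL4 ij.1 ij.2).aestronglyMeasurable.aemeasurable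
  simp only [mul_apply, transpose_apply]
  rw [integral_finsetSum _ fun t _ => ((hL4 b t).mul' (r := 2) (hL4 a t)).integrable one_le_two]
  simp [hindep.integral_mul_eq_ite_s17 hXm (fun ij => hmean ij.1 ij.2) (fun ij => hvar ij.1 ij.2)
    (a, _) (b, _)]

include hfour

lemma covariance_mul_transpose_apply (a b c d : m) :
    cov[fun ω => (Φ ω * (Φ ω)ᵀ) a b, fun ω => (Φ ω * (Φ ω)ᵀ) c d; μ]
      = Fintype.card n * wickCov ν a b c d := by
  simp only [mul_apply, transpose_apply]
  rw [covariance_fun_sum_fun_sum (fun t => (hL4 b t).mul' (r := 2) (hL4 a t))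
    (fun s => (hL4 d s).mul' (r := 2) (hL4 c s))]
  have hcov (t s : n) : cov[fun ω => Φ ω a t * Φ ω b t, fun ω => Φ ω c s * Φ ω d s; μ]
      = if t = s then wickCov ν a b c d else 0 := by
    rw [hindep.covariance_mul_mul_eq_wickCov (fun ij => hL4 ij.1 ij.2) (fun ij => hmean ij.1 ij.2)
      (fun ij => hvar ij.1 ij.2) (fun ij => hfour ij.1 ij.2) (a, t) (b, t) (c, s) (d, s)]
    by_cases hts : t = s <;> simp [wickCov, hts]
  simp only [hcov, Finset.sum_ite_eq, Finset.mem_univ, if_true, Finset.sum_const,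
    Finset.card_univ, nsmul_eq_mul]

lemma integral_centeredGram_apply_mul (a b c d : m) :
    ∫ ω, centeredGram (Φ ω) a b * centeredGram (Φ ω) c d ∂μ
      = Fintype.card n * wickCov ν a b c d := by
  simp only [centeredGram_apply, ← integral_mul_transpose_apply hL4 hindep hmean hvar]
  exact covariance_mul_transpose_apply hL4 hindep hmean hvar hfour a b c d

lemma integral_trace_centeredGram_mul (A : Matrix m m ℝ) :
    ∫ ω, trace (centeredGram (Φ ω) * A * centeredGram (Φ ω) * A) ∂μ
      = Fintype.card n * ((ν - 3) * ∑ j, A j j ^ 2 + ∑ i, ∑ j, A i j ^ 2 + A.trace ^ 2) := by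
  have hint (a b c d : m) :
      Integrable (fun ω => A b c * A d a * (centeredGram (Φ ω) a b * centeredGram (Φ ω) c d)) μ :=
    ((memLp_centeredGram_apply hL4 a b).integrable_mul
      (memLp_centeredGram_apply hL4 c d)).const_mul _
  calc _ = ∫ ω, ∑ a, ∑ b, ∑ c, ∑ d,
        A b c * A d a * (centeredGram (Φ ω) a b * centeredGram (Φ ω) c d) ∂μ := by
        simp only [trace_mul_mul_mul_mul]
        congr! 6 with ω a b c d
        ring
    _ = ∑ a, ∑ b, ∑ c, ∑ d, A b c * A d a * (Fintype.card n * wickCov ν a b c d) := by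
        simp (disch := intros; fun_prop) only [integral_finsetSum, integral_const_mul,
          integral_centeredGram_apply_mul hL4 hindep hmean hvar hfour]
    _ = _ := by
        simp only [mul_left_comm _ (Fintype.card n : ℝ), ← Finset.mul_sum, sum_mul_mul_wickCov]

end Gram

theorem expectation_frobenius_centered_gram_general
    {Ω : Type*} [MeasurableSpace Ω] (μ : Measure Ω) [IsProbabilityMeasure μ]
    (p q : ℕ) (Phi : Ω → Matrix (Fin p) (Fin q) ℝ)
    (A : Matrix (Fin p) (Fin p) ℝ) (hA : A.PosSemidef) (ν : ℝ)
    (hL4 : ∀ i j, MemLp (fun ω => Phi ω i j) 4 μ)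
    (hindep : iIndepFun
      (fun (ij : Fin p × Fin q) ω => Phi ω ij.1 ij.2) μ)
    (hmean : ∀ i j, ∫ ω, Phi ω i j ∂μ = 0)
    (hvar : ∀ i j, ∫ ω, (Phi ω i j) ^ 2 ∂μ = 1)
    (hfour : ∀ i j, ∫ ω, (Phi ω i j) ^ 4 ∂μ = ν) :
    ∫ ω, ∑ i, ∑ j,
        ((hA.sqrt * (Phi ω * (Phi ω)ᵀ - (q : ℝ) • (1 : Matrix (Fin p) (Fin p) ℝ)) * hA.sqrt) i j) ^ 2 ∂μ
      = (q : ℝ) * ((ν - 3) * ∑ j, (A j j) ^ 2 + (∑ i, ∑ j, (A i j) ^ 2)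
          + A.trace ^ 2) := by
  have hM (ω : Ω) :
      Phi ω * (Phi ω)ᵀ - (q : ℝ) • (1 : Matrix (Fin p) (Fin p) ℝ) = centeredGram (Phi ω) := by
    rw [centeredGram, Fintype.card_fin]
  simp only [hM, sum_sq_mul_mul_apply_eq_trace hA.transpose_sqrt (transpose_centeredGram _),
    hA.sqrt_mul_self]
  rw [integral_trace_centeredGram_mul hL4 hindep hmean hvar hfour, Fintype.card_fin]

/-- For a `p × q` random matrix `Φ` with i.i.d. entries of mean 0,
variance 1 and fourth moment `ν̃₄`, and `A` real symmetric positive semidefinite,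
`E ‖A^{1/2}(ΦΦᵀ − qI)A^{1/2}‖_F² = q[(ν̃₄−3) ∑ A_jj² + ‖A‖_F² + (tr A)²]`. -/
theorem expectation_frobenius_centered_gram
    {Ω : Type*} [MeasurableSpace Ω] (μ : Measure Ω) [IsProbabilityMeasure μ]
    (p q : ℕ) (Phi : Ω → Matrix (Fin p) (Fin q) ℝ)
    (A : Matrix (Fin p) (Fin p) ℝ) (hAsym : A.IsSymm) (hA : A.PosSemidef) (ν : ℝ)
    (hmeas : ∀ i j, Measurable fun ω => Phi ω i j)
    (hL4 : ∀ i j, MemLp (fun ω => Phi ω i j) 4 μ)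
    (hindep : iIndepFun
      (fun (ij : Fin p × Fin q) ω => Phi ω ij.1 ij.2) μ)
    (hident : ∀ ij kl : Fin p × Fin q,
      IdentDistrib (fun ω => Phi ω ij.1 ij.2) (fun ω => Phi ω kl.1 kl.2) μ μ)
    (hmean : ∀ i j, ∫ ω, Phi ω i j ∂μ = 0)
    (hvar : ∀ i j, ∫ ω, (Phi ω i j) ^ 2 ∂μ = 1)
    (hfour : ∀ i j, ∫ ω, (Phi ω i j) ^ 4 ∂μ = ν) :
    ∫ ω, ∑ i, ∑ j,
        ((hA.sqrt * (Phi ω * (Phi ω)ᵀ - (q : ℝ) • (1 : Matrix (Fin p) (Fin p) ℝ)) * hA.sqrt) i j) ^ 2 ∂μ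
      = (q : ℝ) * ((ν - 3) * ∑ j, (A j j) ^ 2 + (∑ i, ∑ j, (A i j) ^ 2)
          + A.trace ^ 2) :=
  expectation_frobenius_centered_gram_general μ p q Phi A hA ν hL4 hindep hmean hvar hfour
end

section
/- Let M = u vᵀ + σ² 𝟏_p 𝟏_qᵀ where u ∈ ℝᵖ, v ∈ ℝ^q, σ ∈ ℝ, and 𝟏_p, 𝟏_q are all-ones vectors. Suppose a ∈ ℝᵖ satisfies aᵀ𝟏_p = 0 and aᵀu ≠ 0, and b ∈ ℝ^q satisfies bᵀ𝟏_q = 0 and bᵀv ≠ 0. Then aᵀ M b ≠ 0 and σ² = (𝟏_pᵀ M 𝟏_q)/(pq) − (𝟏_pᵀ M b)(aᵀ M 𝟏_q) / (pq · aᵀ M b). -/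
open Matrix

lemma bilin_key {p q : ℕ} (u : Fin p → ℝ) (v : Fin q → ℝ) (σ : ℝ) (x : Fin p → ℝ) (y : Fin q → ℝ) :
    x ⬝ᵥ (Matrix.vecMulVec u v + σ ^ 2 • Matrix.of (fun _ _ => (1 : ℝ))).mulVec y
      = (x ⬝ᵥ u) * (y ⬝ᵥ v) + σ ^ 2 * (x ⬝ᵥ (fun _ => 1)) * (y ⬝ᵥ (fun _ => 1)) := by
  simp [mulVec, dotProduct, Finset.mul_sum, Finset.sum_mul, vecMulVec, mul_assoc, mul_comm,
    mul_left_comm, mul_add, Finset.sum_add_distrib]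
  rw [Finset.sum_comm]

/-- In the model `M = u vᵀ + σ² 𝟏_p 𝟏_qᵀ`, projecting with vectors
`a ⊥ 𝟏_p` (with `aᵀu ≠ 0`) and `b ⊥ 𝟏_q` (with `bᵀv ≠ 0`) gives `aᵀMb ≠ 0` and
identifies `σ² = 𝟏ᵀM𝟏/(pq) − (𝟏ᵀMb)(aᵀM𝟏)/(pq · aᵀMb)`. -/
theorem noise_variance_identification
    {p q : ℕ} (hp : 0 < p) (hq : 0 < q)
    (u : Fin p → ℝ) (v : Fin q → ℝ) (σ : ℝ)
    (M : Matrix (Fin p) (Fin q) ℝ)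
    (hM : M = Matrix.vecMulVec u v + σ ^ 2 • Matrix.of (fun _ _ => (1 : ℝ)))
    (a : Fin p → ℝ) (ha1 : a ⬝ᵥ (fun _ => (1 : ℝ)) = 0) (hau : a ⬝ᵥ u ≠ 0)
    (b : Fin q → ℝ) (hb1 : b ⬝ᵥ (fun _ => (1 : ℝ)) = 0) (hbv : b ⬝ᵥ v ≠ 0) :
    a ⬝ᵥ M.mulVec b ≠ 0 ∧
    σ ^ 2 = ((fun _ => (1 : ℝ)) ⬝ᵥ M.mulVec (fun _ => (1 : ℝ))) / (p * q)
        - (((fun _ => (1 : ℝ)) ⬝ᵥ M.mulVec b) * (a ⬝ᵥ M.mulVec (fun _ => (1 : ℝ))))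
          / ((p * q) * (a ⬝ᵥ M.mulVec b)) := by
  subst hM
  have h1p : (fun _ => (1 : ℝ)) ⬝ᵥ (fun _ : Fin p => (1 : ℝ)) = (p : ℝ) := by
    simp [dotProduct]
  have h1q : (fun _ => (1 : ℝ)) ⬝ᵥ (fun _ : Fin q => (1 : ℝ)) = (q : ℝ) := by
    simp [dotProduct]
  rw [bilin_key, bilin_key, bilin_key, bilin_key, ha1, hb1, h1p, h1q]
  have hab : (a ⬝ᵥ u) * (b ⬝ᵥ v) + σ ^ 2 * 0 * 0 ≠ 0 := by
    simpa using mul_ne_zero hau hbv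
  refine ⟨hab, ?_⟩
  have hp' : (p : ℝ) ≠ 0 := Nat.cast_ne_zero.mpr hp.ne'
  have hq' : (q : ℝ) ≠ 0 := Nat.cast_ne_zero.mpr hq.ne'
  field_simp
  ring
end
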